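/- arXiv:2512.06488 — 2 statements merged into one kernel-verified Lean document; each statement's English description precedes it below -/
import Mathlib

section
/- For a matrix F₁ ∈ ℂ^{n×n}, let F̃₁ ∈ ℂ^{n×n²} be the block-diagonal stacking of the rows of F₁, i.e. (F̃₁)_{j,(j-1)n+l} = (F₁)_{jl} and all other entries zero. Then for p, q ∈ [1,∞) with 1/p + 1/q = 1, the operator p-norm of F̃₁ equals the maximum row q-norm of F₁: ‖F̃₁‖_p = max_j (∑_l |(F₁)_{jl}|^q)^{1/q}. -/
open scoped BigOperators

/-- The vector `p`-norm on `ι → ℂ`. -/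
noncomputable def vecPNorm {ι : Type*} [Fintype ι] (p : ℝ) (x : ι → ℂ) : ℝ :=
  (∑ i, ‖x i‖ ^ p) ^ (1 / p)

/-- The operator `p`-norm of a matrix, as the supremum of `‖A y‖_p` over `p`-unit vectors `y`. -/
noncomputable def opPNorm {ι κ : Type*} [Fintype ι] [Fintype κ] (p : ℝ)
    (A : Matrix ι κ ℂ) : ℝ :=
  sSup {r | ∃ y : κ → ℂ, vecPNorm p y = 1 ∧ r = vecPNorm p (A.mulVec y)}

/-!
Row `j` of `F̃ y` is `∑ l, F j l * y (j, l)`, which Hölder's inequality bounds by `‖F j‖_q` times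
the `p`-norm of the `j`-th block of `y`; summing `p`-th powers over `j` gives
`‖F̃ y‖_p ≤ (maxⱼ ‖F j‖_q) ‖y‖_p`. Equality is attained by the vector supported on the block of a
maximal row, filled there with the extremal vector of Hölder's inequality.
-/

open Matrix

section VecPNorm

variable {ι : Type*} [Fintype ι] {p q : ℝ}

lemma vecPNorm_nonneg (p : ℝ) (x : ι → ℂ) : 0 ≤ vecPNorm p x := by
  unfold vecPNorm; positivity

lemma vecPNorm_rpow (hp : p ≠ 0) (x : ι → ℂ) : vecPNorm p x ^ p = ∑ i, ‖x i‖ ^ p := by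
  rw [vecPNorm, one_div, Real.rpow_inv_rpow (by positivity) hp]

lemma vecPNorm_le_iff_sum_rpow_le (hp : 0 < p) {x : ι → ℂ} {M : ℝ} (hM : 0 ≤ M) :
    vecPNorm p x ≤ M ↔ ∑ i, ‖x i‖ ^ p ≤ M ^ p := by
  rw [← vecPNorm_rpow hp.ne', Real.rpow_le_rpow_iff (vecPNorm_nonneg p x) hM hp]

lemma vecPNorm_zero (hp : p ≠ 0) : vecPNorm p (0 : ι → ℂ) = 0 := by
  simp [vecPNorm, Real.zero_rpow hp, Real.zero_rpow (inv_ne_zero hp)]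

lemma vecPNorm_eq_zero_iff (hp : 0 < p) {x : ι → ℂ} : vecPNorm p x = 0 ↔ x = 0 := by
  rw [vecPNorm, Real.rpow_eq_zero_iff_of_nonneg (by positivity),
    Finset.sum_eq_zero_iff_of_nonneg (fun _ _ => by positivity), funext_iff]
  simp [Real.rpow_eq_zero (norm_nonneg _) hp.ne', hp.ne']

lemma vecPNorm_eq_one_iff (hp : p ≠ 0) {x : ι → ℂ} : vecPNorm p x = 1 ↔ ∑ i, ‖x i‖ ^ p = 1 := by
  refine ⟨fun h => ?_, fun h => ?_⟩
  · rw [← vecPNorm_rpow hp, h, Real.one_rpow]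
  · rw [vecPNorm, h, Real.one_rpow]

lemma vecPNorm_piSingle [DecidableEq ι] (hp : 0 < p) (i : ι) (c : ℂ) :
    vecPNorm p (Pi.single i c) = ‖c‖ := by
  have h (j : ι) : ‖(Pi.single i c : ι → ℂ) j‖ ^ p = (Pi.single i (‖c‖ ^ p) : ι → ℝ) j := by
    by_cases hj : j = i
    · subst hj; simp
    · simp [hj, Real.zero_rpow hp.ne']
  simp only [vecPNorm, h, Finset.sum_pi_single', Finset.mem_univ, if_true]
  rw [← Real.rpow_mul (norm_nonneg c), mul_one_div_cancel hp.ne', Real.rpow_one]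

lemma norm_sum_mul_le_vecPNorm_mul_vecPNorm (hpq : p.HolderConjugate q) (a b : ι → ℂ) :
    ‖∑ i, a i * b i‖ ≤ vecPNorm p a * vecPNorm q b :=
  calc ‖∑ i, a i * b i‖ ≤ ∑ i, ‖a i‖ * ‖b i‖ := by
        simpa only [norm_mul] using norm_sum_le Finset.univ fun i => a i * b i
    _ ≤ vecPNorm p a * vecPNorm q b :=
        Real.inner_le_Lp_mul_Lq_of_nonneg Finset.univ hpq (fun _ _ => norm_nonneg _)
          (fun _ _ => norm_nonneg _)

lemma mul_conj_mul_norm_rpow (z : ℂ) (hp : p ≠ 0) :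
    z * (starRingEnd ℂ z * ((‖z‖ ^ (p - 2) : ℝ) : ℂ)) = ((‖z‖ ^ p : ℝ) : ℂ) := by
  rw [← mul_assoc, Complex.mul_conj', ← Complex.ofReal_pow, ← Complex.ofReal_mul,
    ← Real.rpow_natCast, ← Real.rpow_add' (norm_nonneg z) (by simpa using hp)]
  norm_num

lemma norm_conj_mul_norm_rpow (z : ℂ) (hp : p - 1 ≠ 0) :
    ‖starRingEnd ℂ z * ((‖z‖ ^ (p - 2) : ℝ) : ℂ)‖ = ‖z‖ ^ (p - 1) := by
  rw [norm_mul, RCLike.norm_conj, Complex.norm_real, Real.norm_of_nonneg (by positivity),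
    ← Real.rpow_one_add' (norm_nonneg z) (by convert hp using 1; ring)]
  ring_nf

lemma exists_vecPNorm_eq_one_sum_mul_eq [Nonempty ι] (hpq : p.HolderConjugate q) (a : ι → ℂ) :
    ∃ b : ι → ℂ, vecPNorm q b = 1 ∧ ∑ i, a i * b i = vecPNorm p a := by
  classical
  by_cases ha : a = 0
  · obtain ⟨i⟩ := ‹Nonempty ι›
    refine ⟨Pi.single i 1, by rw [vecPNorm_piSingle hpq.symm.pos, norm_one], ?_⟩
    simp [ha, vecPNorm_zero hpq.ne_zero]
  set N := vecPNorm p a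
  have hN : 0 < N := (vecPNorm_nonneg p a).lt_of_ne' ((vecPNorm_eq_zero_iff hpq.pos).not.2 ha)
  -- Equality in Hölder's inequality forces `a i * b i ∝ ‖a i‖ ^ p`.
  refine ⟨fun i => starRingEnd ℂ (a i) * ((‖a i‖ ^ (p - 2) : ℝ) : ℂ) * ((N ^ (p - 1))⁻¹ : ℝ),
    ?_, ?_⟩
  · rw [vecPNorm_eq_one_iff hpq.symm.ne_zero]
    have hNp : 0 ≤ (N ^ (p - 1))⁻¹ := by positivity
    calc ∑ i, ‖starRingEnd ℂ (a i) * ((‖a i‖ ^ (p - 2) : ℝ) : ℂ) * ((N ^ (p - 1))⁻¹ : ℝ)‖ ^ q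
        = ∑ i, ‖a i‖ ^ p * (N ^ p)⁻¹ := by
          refine Finset.sum_congr rfl fun i _ => ?_
          rw [norm_mul, norm_conj_mul_norm_rpow _ hpq.sub_one_ne_zero, Complex.norm_real,
            Real.norm_of_nonneg hNp, Real.mul_rpow (by positivity) hNp,
            Real.inv_rpow (by positivity), ← Real.rpow_mul (norm_nonneg _), ← Real.rpow_mul hN.le,
            hpq.sub_one_mul_conj]
      _ = 1 := by
        rw [← Finset.sum_mul, ← vecPNorm_rpow hpq.ne_zero, mul_inv_cancel₀ (by positivity)]
  · simp only [← mul_assoc, mul_conj_mul_norm_rpow _ hpq.ne_zero, ← Complex.ofReal_mul,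
      ← Complex.ofReal_sum, ← Finset.sum_mul, ← vecPNorm_rpow hpq.ne_zero]
    rw [← Real.rpow_neg hN.le, ← Real.rpow_add hN]
    norm_num

end VecPNorm

section RowStacking

variable {ι κ : Type*} [Fintype ι] [Fintype κ] [DecidableEq ι] {p q : ℝ}

def rowStacking (F : Matrix ι κ ℂ) : Matrix ι (ι × κ) ℂ :=
  Matrix.of fun j x => if j = x.1 then F j x.2 else 0

lemma rowStacking_mulVec_apply (F : Matrix ι κ ℂ) (y : ι × κ → ℂ) (j : ι) :
    (rowStacking F *ᵥ y) j = ∑ l, F j l * y (j, l) := by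
  simp [rowStacking, Matrix.mulVec, dotProduct, Fintype.sum_prod_type, ite_mul]

lemma rowStacking_mulVec_uncurry_single (F : Matrix ι κ ℂ) (j : ι) (b : κ → ℂ) :
    rowStacking F *ᵥ Function.uncurry (Pi.single j b) = Pi.single j (∑ l, F j l * b l) := by
  ext j'
  rw [rowStacking_mulVec_apply]
  by_cases h : j' = j
  · subst h; simp
  · simp [h]

lemma vecPNorm_uncurry_single (hp : 0 < p) (j : ι) (b : κ → ℂ) :
    vecPNorm p (Function.uncurry (Pi.single j b)) = vecPNorm p b := by
  rw [vecPNorm, vecPNorm, Fintype.sum_prod_type, Finset.sum_eq_single j]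
  · simp
  · intro j' _ h
    simp [h, Real.zero_rpow hp.ne']
  · simp

lemma vecPNorm_rowStacking_mulVec_le [Nonempty ι] (hpq : p.HolderConjugate q)
    (F : Matrix ι κ ℂ) {M : ℝ} (hM : ∀ j, vecPNorm q (F j) ≤ M) (y : ι × κ → ℂ) :
    vecPNorm p (rowStacking F *ᵥ y) ≤ M * vecPNorm p y := by
  have hM0 : 0 ≤ M := (vecPNorm_nonneg q (F (Classical.arbitrary ι))).trans (hM _)
  rw [vecPNorm_le_iff_sum_rpow_le hpq.pos (mul_nonneg hM0 (vecPNorm_nonneg p y)),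
    Real.mul_rpow hM0 (vecPNorm_nonneg p y), vecPNorm_rpow hpq.ne_zero, Fintype.sum_prod_type,
    Finset.mul_sum]
  gcongr with j
  calc ‖(rowStacking F *ᵥ y) j‖ ^ p ≤ (M * vecPNorm p (fun l => y (j, l))) ^ p := by
        gcongr
        · exact hpq.nonneg
        rw [rowStacking_mulVec_apply]
        exact (norm_sum_mul_le_vecPNorm_mul_vecPNorm hpq.symm _ _).trans
          (by gcongr; exacts [vecPNorm_nonneg _ _, hM j])
    _ = M ^ p * ∑ l, ‖y (j, l)‖ ^ p := by
        rw [Real.mul_rpow hM0 (vecPNorm_nonneg _ _), vecPNorm_rpow hpq.ne_zero]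

theorem opPNorm_rowStacking [Nonempty ι] [Nonempty κ] (hpq : p.HolderConjugate q)
    (F : Matrix ι κ ℂ) : opPNorm p (rowStacking F) = ⨆ j, vecPNorm q (F j) := by
  obtain ⟨j₀, hj₀⟩ := exists_eq_ciSup_of_finite (f := fun j => vecPNorm q (F j))
  rw [← hj₀]
  refine IsGreatest.csSup_eq ⟨?_, ?_⟩
  · obtain ⟨b, hb, hFb⟩ := exists_vecPNorm_eq_one_sum_mul_eq hpq.symm (F j₀)
    refine ⟨Function.uncurry (Pi.single j₀ b), by rw [vecPNorm_uncurry_single hpq.pos, hb], ?_⟩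
    rw [rowStacking_mulVec_uncurry_single, vecPNorm_piSingle hpq.pos, hFb, Complex.norm_real,
      Real.norm_of_nonneg (vecPNorm_nonneg _ _)]
  · rintro _ ⟨y, hy, rfl⟩
    have hmax (j : ι) : vecPNorm q (F j) ≤ vecPNorm q (F j₀) :=
      hj₀ ▸ le_ciSup (f := fun j => vecPNorm q (F j)) (Set.finite_range _).bddAbove j
    simpa [hy] using vecPNorm_rowStacking_mulVec_le hpq F hmax y

end RowStacking

/-- the operator `p`-norm of the block-diagonal stacking `F̃₁` of the rows of
`F₁` equals the maximum row `q`-norm of `F₁`, when `1/p + 1/q = 1`. -/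
theorem opPNorm_rowStacking_eq_maxRowQNorm (n : ℕ) (hn : 0 < n)
    (F₁ : Matrix (Fin n) (Fin n) ℂ) (p q : ℝ) (hp : 1 ≤ p) (hq : 1 ≤ q)
    (hpq : 1 / p + 1 / q = 1)
    (Ftilde : Matrix (Fin n) (Fin n × Fin n) ℂ)
    (hF : ∀ j j' l, Ftilde j (j', l) = if j = j' then F₁ j l else 0) :
    opPNorm p Ftilde = ⨆ j : Fin n, vecPNorm q (fun l => F₁ j l) := by
  have : Nonempty (Fin n) := Fin.pos_iff_nonempty.mp hn
  have hp₁ : 1 < p := hp.lt_of_ne <| by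
    rintro rfl
    norm_num at hpq
    linarith
  have hconj : p.HolderConjugate q := Real.holderConjugate_iff.2 ⟨hp₁, by simpa using hpq⟩
  obtain rfl : Ftilde = rowStacking F₁ := by
    ext j ⟨j', l⟩
    exact hF j j' l
  exact opPNorm_rowStacking hconj F₁
end

section
/- Let L be an n×n complex matrix, h > 0 with ‖L‖h ≤ 1, k and m positive integers with m·e²/(k+1)! ≤ 1, and V_k = ∑_{i=0}^{k}(Lh)^i/i!. Then for every integer j with 1 ≤ j ≤ m, ‖(V_k^j − exp(Lhj))·exp(−Lhj)‖ ≤ (e−1)·j·e²/(k+1)!. -/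
open scoped Matrix.Norms.L2Operator

/-!
Put `A = h • L` and `X = V_k * exp (-A)`. Since `V_k` commutes with `A`, the matrix in the claim is
`X ^ j - 1`. The Taylor tail gives `‖X - 1‖ = ‖(V_k - exp A) * exp (-A)‖ ≤ e² / (k+1)! =: ε`, and
then `‖X ^ j - 1‖ ≤ (1 + ε) ^ j - 1 ≤ exp (j ε) - 1 ≤ (e - 1) j ε`, the last step by convexity of
`exp` on `[0, 1]`.
-/

open NormedSpace Finset
open scoped Nat

theorem Real.exp_le_one_add_mul_of_mem_Icc {t : ℝ} (ht₀ : 0 ≤ t) (ht₁ : t ≤ 1) :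
    Real.exp t ≤ 1 + (Real.exp 1 - 1) * t := by
  have := convexOn_exp.2 (Set.mem_univ 0) (Set.mem_univ 1) (sub_nonneg.2 ht₁) ht₀
    (sub_add_cancel 1 t)
  simp only [smul_eq_mul, mul_zero, mul_one, zero_add, Real.exp_zero] at this
  linarith

theorem Real.one_add_pow_sub_one_le {ε : ℝ} (hε : 0 ≤ ε) {j : ℕ} (hjε : j * ε ≤ 1) :
    (1 + ε) ^ j - 1 ≤ (Real.exp 1 - 1) * (j * ε) := by
  have : (1 + ε) ^ j ≤ Real.exp (j * ε) := by
    rw [Real.exp_nat_mul]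
    gcongr
    linarith [Real.add_one_le_exp ε]
  linarith [Real.exp_le_one_add_mul_of_mem_Icc (by positivity) hjε]

theorem Real.hasSum_pow_div_factorial_exp (t : ℝ) : HasSum (fun i => t ^ i / i !) (Real.exp t) :=
  Real.exp_eq_exp_ℝ ▸ expSeries_div_hasSum_exp t

section NormedRing

variable {𝔸 : Type*} [NormedRing 𝔸] [NormOneClass 𝔸]

theorem norm_pow_sub_one_le (X : 𝔸) (j : ℕ) : ‖X ^ j - 1‖ ≤ (1 + ‖X - 1‖) ^ j - 1 := by
  induction j with
  | zero => simp
  | succ j ih =>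
    have hXj : ‖X ^ j‖ ≤ (1 + ‖X - 1‖) ^ j := by
      calc ‖X ^ j‖ ≤ ‖X ^ j - 1‖ + ‖(1 : 𝔸)‖ := norm_le_norm_sub_add _ _
        _ ≤ (1 + ‖X - 1‖) ^ j := by rw [norm_one]; linarith
    calc ‖X ^ (j + 1) - 1‖ = ‖X ^ j * (X - 1) + (X ^ j - 1)‖ := by noncomm_ring
      _ ≤ ‖X ^ j‖ * ‖X - 1‖ + ‖X ^ j - 1‖ := norm_add_le_of_le (norm_mul_le _ _) le_rfl
      _ ≤ (1 + ‖X - 1‖) ^ j * ‖X - 1‖ + ((1 + ‖X - 1‖) ^ j - 1) := by gcongr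
      _ = (1 + ‖X - 1‖) ^ (j + 1) - 1 := by ring

end NormedRing

section BanachAlgebra

variable {𝕂 𝔸 : Type*} [RCLike 𝕂] [NormedRing 𝔸] [NormedAlgebra 𝕂 𝔸] [CompleteSpace 𝔸]

theorem norm_exp_sub_sum_range_le (x : 𝔸) (k : ℕ) :
    ‖exp x - ∑ i ∈ range (k + 1), ((i ! : 𝕂)⁻¹) • x ^ i‖ ≤
      ‖x‖ ^ (k + 1) / (k + 1)! * Real.exp ‖x‖ := by
  have htail := (hasSum_nat_add_iff' (k + 1)).2 (exp_series_hasSum_exp' (𝕂 := 𝕂) x)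
  refine htail.norm_le_of_bounded
    ((Real.hasSum_pow_div_factorial_exp ‖x‖).mul_left _) fun i => ?_
  have hfact : ((k + 1)! * i ! : ℝ) ≤ (i + (k + 1))! := by
    rw [add_comm i]
    exact_mod_cast Nat.le_of_dvd (Nat.factorial_pos _)
      (Nat.factorial_mul_factorial_dvd_factorial_add _ _)
  rw [norm_smul, norm_inv, RCLike.norm_natCast, inv_mul_eq_div, div_mul_div_comm, ← pow_add,
    add_comm (k + 1)]
  gcongr
  exact norm_pow_le' x (by omega)

theorem norm_exp_sub_sum_range_le_of_norm_le_one {x : 𝔸} (hx : ‖x‖ ≤ 1) (k : ℕ) :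
    ‖exp x - ∑ i ∈ range (k + 1), ((i ! : 𝕂)⁻¹) • x ^ i‖ ≤ Real.exp 1 / (k + 1)! := by
  calc _ ≤ ‖x‖ ^ (k + 1) / (k + 1)! * Real.exp ‖x‖ := norm_exp_sub_sum_range_le x k
    _ ≤ 1 / (k + 1)! * Real.exp 1 := by gcongr; exact pow_le_one₀ (norm_nonneg x) hx
    _ = Real.exp 1 / (k + 1)! := by ring

end BanachAlgebra

section RatBanachAlgebra

variable {𝔸 : Type*} [NormedRing 𝔸] [NormedAlgebra ℚ 𝔸] [CompleteSpace 𝔸]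

theorem norm_exp_le_exp_norm [NormOneClass 𝔸] (x : 𝔸) : ‖exp x‖ ≤ Real.exp ‖x‖ := by
  refine (exp_series_hasSum_exp' (𝕂 := ℚ) x).norm_le_of_bounded
    (Real.hasSum_pow_div_factorial_exp ‖x‖) fun i => ?_
  rw [norm_smul, norm_inv, ← Rat.norm_cast_real, Rat.cast_natCast, RCLike.norm_natCast,
    inv_mul_eq_div]
  gcongr
  exact norm_pow_le x i

theorem norm_mul_exp_neg_sub_one_le [NormOneClass 𝔸] (V x : 𝔸) :
    ‖V * exp (-x) - 1‖ ≤ ‖V - exp x‖ * Real.exp ‖x‖ := by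
  have hfactor : V * exp (-x) - 1 = (V - exp x) * exp (-x) := by
    rw [sub_mul, ← exp_add_of_commute (Commute.refl x).neg_right, add_neg_cancel, exp_zero]
  rw [hfactor]
  refine (norm_mul_le _ _).trans ?_
  gcongr
  simpa only [norm_neg] using norm_exp_le_exp_norm (-x)

theorem pow_sub_exp_nsmul_mul_exp_neg_of_commute {V A : 𝔸} (hVA : Commute V A) (j : ℕ) :
    (V ^ j - exp (j • A)) * exp (-(j • A)) = (V * exp (-A)) ^ j - 1 := by
  have hAA : Commute A (-A) := (Commute.refl A).neg_right
  rw [← smul_neg, exp_nsmul, exp_nsmul, sub_mul, ← (hVA.neg_right.exp_right).mul_pow,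
    ← hAA.exp.mul_pow, ← exp_add_of_commute hAA, add_neg_cancel, exp_zero, one_pow]

end RatBanachAlgebra

theorem taylor_remainder_bound_general (n : ℕ) (L : Matrix (Fin n) (Fin n) ℂ) (h : ℝ)
    (hh : 0 < h) (hLh : ‖L‖ * h ≤ 1) (k m : ℕ)
    (hmk : (m : ℝ) * Real.exp 1 ^ 2 / (k + 1).factorial ≤ 1) :
    ∀ j : ℕ, 1 ≤ j → j ≤ m →
      ‖((∑ i ∈ Finset.range (k + 1), ((i.factorial : ℂ)⁻¹) • (h • L) ^ i) ^ j -
            NormedSpace.exp ((h * j : ℝ) • L)) *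
          NormedSpace.exp (-((h * j : ℝ) • L))‖ ≤
        (Real.exp 1 - 1) * j * Real.exp 1 ^ 2 / (k + 1).factorial := by
  intro j _ hjm
  -- Matrices over `Fin 0` form the zero ring, which is not a `NormOneClass`.
  rcases isEmpty_or_nonempty (Fin n) with _ | _
  · rw [Subsingleton.elim (_ * _) 0, norm_zero]
    have : 0 ≤ Real.exp 1 - 1 := by linarith [Real.add_one_le_exp 1]
    positivity
  let _ : NormedAlgebra ℚ (Matrix (Fin n) (Fin n) ℂ) := .restrictScalars ℚ ℂ _
  set A := h • L
  set V := ∑ i ∈ range (k + 1), ((i ! : ℂ)⁻¹) • A ^ i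
  set ε := Real.exp 1 ^ 2 / (k + 1)!
  have hA : ‖A‖ ≤ 1 := by rw [norm_smul, Real.norm_of_nonneg hh.le]; linarith
  have hX : ‖V * exp (-A) - 1‖ ≤ ε := calc
    _ ≤ ‖V - exp A‖ * Real.exp ‖A‖ := norm_mul_exp_neg_sub_one_le V A
    _ ≤ Real.exp 1 / (k + 1)! * Real.exp 1 := by
      gcongr
      rw [norm_sub_rev]
      exact norm_exp_sub_sum_range_le_of_norm_le_one hA k
    _ = ε := by ring
  have hjε : j * ε ≤ 1 := calc
    j * ε ≤ m * ε := by gcongr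
    _ ≤ 1 := by rw [← mul_div_assoc]; exact hmk
  have hVA : Commute V A :=
    Commute.sum_left _ _ _ fun i _ => ((Commute.refl A).pow_left i).smul_left _
  have hsmul : (h * j : ℝ) • L = j • A := by rw [mul_comm, ← smul_smul, Nat.cast_smul_eq_nsmul]
  rw [hsmul, pow_sub_exp_nsmul_mul_exp_neg_of_commute hVA]
  calc ‖(V * exp (-A)) ^ j - 1‖ ≤ (1 + ‖V * exp (-A) - 1‖) ^ j - 1 := norm_pow_sub_one_le _ j
    _ ≤ (1 + ε) ^ j - 1 := by gcongr
    _ ≤ (Real.exp 1 - 1) * (j * ε) := Real.one_add_pow_sub_one_le (by positivity) hjε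
    _ = _ := by ring

/-- Taylor remainder bound.  With `‖L‖h ≤ 1`, `m·e²/(k+1)! ≤ 1` and
`V_k = ∑_{i=0}^{k}(Lh)^i/i!`, for every `1 ≤ j ≤ m`,
`‖(V_k^j − exp(Lhj)) exp(−Lhj)‖ ≤ (e−1)·j·e²/(k+1)!`. -/
theorem taylor_remainder_bound (n : ℕ) (L : Matrix (Fin n) (Fin n) ℂ) (h : ℝ)
    (hh : 0 < h) (hLh : ‖L‖ * h ≤ 1) (k m : ℕ) (hk : 0 < k) (hm : 0 < m)
    (hmk : (m : ℝ) * Real.exp 1 ^ 2 / (k + 1).factorial ≤ 1) :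
    ∀ j : ℕ, 1 ≤ j → j ≤ m →
      ‖((∑ i ∈ Finset.range (k + 1), ((i.factorial : ℂ)⁻¹) • (h • L) ^ i) ^ j -
            NormedSpace.exp ((h * j : ℝ) • L)) *
          NormedSpace.exp (-((h * j : ℝ) • L))‖ ≤
        (Real.exp 1 - 1) * j * Real.exp 1 ^ 2 / (k + 1).factorial :=
  taylor_remainder_bound_general n L h hh hLh k m hmk
end
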